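/- arXiv:2405.05102 — 5 statements merged into one kernel-verified Lean document; each statement's English description precedes it below -/
import Mathlib

section
/- For every integer i ≥ 1, the series Σ_{j=i+1}^∞ b(j)/((j−i)·h_{j−1}) converges and equals b(i); that is, the sequence (b(i)) satisfies b(i) = Σ_{j>i} b(j)·p(j,i) for all i ≥ 1, where p(j,i) = 1/((j−i)·h_{j−1}). -/
/-!
For `j > i ≥ 1` the harmonic numbers cancel: `b(j) p(j,i) = 6 / (π² (j-1) (j-i))`. Writing
`j = n + i + 1`, the series is `6/π² · ∑ₙ 1 / ((n+i)(n+1))`. For `i = 1` this is `6/π² · ζ(2) = 1`;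
for `i = k + 1 ≥ 2` partial fractions turn it into `6/(π² k) · ∑ₙ (1/(n+1) - 1/(n+k+1))`, which
telescopes to `6 h_k / (π² k) = b(i)`.
-/

open Real Filter Topology MeasureTheory

/-- The harmonic number `h n = ∑_{i=1}^n 1/i`, with `h 0 = 0`. -/
noncomputable def harmonic' (n : ℕ) : ℝ := ∑ i ∈ Finset.Icc 1 n, (1 : ℝ) / i

/-- One-step transition probabilities of the harmonic descent chain,
`p j i = 1/((j-i)·h_{j-1})` for `1 ≤ i < j`. -/
noncomputable def hdP (j i : ℕ) : ℝ := 1 / (((j : ℝ) - (i : ℝ)) * harmonic' (j - 1))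

/-- `b 1 = 1` and `b i = 6 h_{i-1} / (π² (i-1))` for `i ≥ 2`. -/
noncomputable def hdB (i : ℕ) : ℝ :=
  if i = 1 then 1 else 6 * harmonic' (i - 1) / (Real.pi ^ 2 * ((i : ℝ) - 1))

theorem Antitone.hasSum_sub_succ {f : ℕ → ℝ} (hf : Antitone f) (hlim : Tendsto f atTop (𝓝 0)) :
    HasSum (fun n ↦ f n - f (n + 1)) (f 0) := by
  rw [hasSum_iff_tendsto_nat_of_nonneg (fun n ↦ sub_nonneg.2 (hf n.le_succ))]
  simp only [Finset.sum_range_sub']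
  simpa using tendsto_const_nhds.sub hlim

theorem Antitone.hasSum_sub_add {f : ℕ → ℝ} (hf : Antitone f) (hlim : Tendsto f atTop (𝓝 0))
    (k : ℕ) : HasSum (fun n ↦ f n - f (n + k)) (∑ m ∈ Finset.range k, f m) := by
  have hshift (m : ℕ) : HasSum (fun n ↦ f (n + m) - f (n + (m + 1))) (f m) := by
    simpa [add_right_comm _ 1 m, add_assoc] using
      (hf.comp_monotone (monotone_id.add_const m)).hasSum_sub_succ
        (hlim.comp (tendsto_add_atTop_nat m))
  convert hasSum_sum fun m _ ↦ hshift m using 1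
  ext n
  rw [Finset.sum_range_sub' (fun m ↦ f (n + m)), add_zero]

theorem harmonic'_eq_harmonic (n : ℕ) : harmonic' n = harmonic n := by
  simp [harmonic', harmonic_eq_sum_Icc]

theorem hasSum_inv_succ_sub_inv_add_succ (k : ℕ) :
    HasSum (fun n : ℕ ↦ ((n : ℝ) + 1)⁻¹ - ((n : ℝ) + k + 1)⁻¹) (harmonic k) := by
  have hf : Antitone fun n : ℕ ↦ ((n : ℝ) + 1)⁻¹ := fun a b hab ↦ by
    dsimp only; gcongr
  have hlim : Tendsto (fun n : ℕ ↦ ((n : ℝ) + 1)⁻¹) atTop (𝓝 0) := by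
    simpa only [one_div] using tendsto_one_div_add_atTop_nhds_zero_nat (𝕜 := ℝ)
  convert hf.hasSum_sub_add hlim k using 1
  · ext n; push_cast; ring
  · simp [harmonic]

theorem hasSum_inv_add_succ_mul_succ {k : ℕ} (hk : k ≠ 0) :
    HasSum (fun n : ℕ ↦ (((n : ℝ) + k + 1) * ((n : ℝ) + 1))⁻¹) (harmonic k / k) := by
  have hk' : (k : ℝ) ≠ 0 := by exact_mod_cast hk
  have hsplit (n : ℕ) : (((n : ℝ) + k + 1) * ((n : ℝ) + 1))⁻¹ =
      (((n : ℝ) + 1)⁻¹ - ((n : ℝ) + k + 1)⁻¹) / k := by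
    field_simp
    ring
  simpa only [hsplit] using (hasSum_inv_succ_sub_inv_add_succ k).div_const (k : ℝ)

theorem hasSum_inv_succ_sq : HasSum (fun n : ℕ ↦ (((n : ℝ) + 1) ^ 2)⁻¹) (π ^ 2 / 6) := by
  simpa using (hasSum_nat_add_iff' 1).mpr hasSum_zeta_two

theorem hasSum_ite_lt_iff {M : Type*} [AddCommMonoid M] [TopologicalSpace M] {g : ℕ → M} {a : M}
    (i : ℕ) : HasSum (fun j ↦ if i < j then g j else 0) a ↔ HasSum (fun n ↦ g (n + (i + 1))) a := by
  rw [← (add_left_injective (i + 1)).hasSum_iff]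
  · simp only [Function.comp_def]
    congr! with n
    exact if_pos (by omega)
  · intro j hj
    rw [if_neg]
    contrapose! hj
    exact ⟨j - (i + 1), by simp; omega⟩

theorem hdB_mul_hdP {j : ℕ} (hj : 2 ≤ j) (i : ℕ) :
    hdB j * hdP j i = 6 / π ^ 2 / (((j : ℝ) - 1) * ((j : ℝ) - i)) := by
  have hh : harmonic' (j - 1) ≠ 0 := by
    rw [harmonic'_eq_harmonic]; exact_mod_cast (harmonic_pos (by omega)).ne'
  have hj1 : (j : ℝ) - 1 ≠ 0 := by
    rw [sub_ne_zero]; exact_mod_cast (by omega : j ≠ 1)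
  rw [hdB, if_neg (by omega), hdP]
  rcases eq_or_ne ((j : ℝ) - i) 0 with hji | hji
  · -- both sides are junk `x / 0 = 0`
    simp [hji]
  · field_simp

theorem hdB_harmonic_equation (i : ℕ) (hi : 1 ≤ i) :
    HasSum (fun j : ℕ => if i < j then hdB j * hdP j i else 0) (hdB i) := by
  obtain ⟨k, rfl⟩ := Nat.exists_eq_add_of_le' hi
  rw [hasSum_ite_lt_iff]
  have hterm (n : ℕ) : hdB (n + (k + 1 + 1)) * hdP (n + (k + 1 + 1)) (k + 1) =
      6 / π ^ 2 * (((n : ℝ) + k + 1) * ((n : ℝ) + 1))⁻¹ := by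
    rw [hdB_mul_hdP (by omega)]
    push_cast
    ring
  simp only [hterm]
  rcases Nat.eq_zero_or_pos k with rfl | hk
  · have hval : hdB (0 + 1) = 6 / π ^ 2 * (π ^ 2 / 6) := by
      simp [hdB, pi_ne_zero]
    simp only [hval, Nat.cast_zero, add_zero, ← sq]
    exact hasSum_inv_succ_sq.mul_left _
  · have hval : hdB (k + 1) = 6 / π ^ 2 * (harmonic k / k) := by
      rw [hdB, if_neg (by omega), harmonic'_eq_harmonic]
      push_cast
      ring
    rw [hval]
    exact (hasSum_inv_add_succ_mul_succ hk.ne').mul_left _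
end

section
/- Let c : {1,2,3,...} → [0,∞) be any sequence such that for every i ≥ 1 the series Σ_{j=i+1}^∞ c(j)·p(j,i) converges and equals c(i). Then for all integers 1 ≤ i ≤ k, c(i) = Σ_{m=k+1}^∞ Σ_{j=i}^k c(m)·p(m,j)·a(j,i), where the double series converges. -/
open Real Filter Topology MeasureTheory

/-!
For a descending kernel `p`, the occupation probabilities `a n i` are defined through the last
step into `i`; decomposing instead along the first step out of `n` gives
`a n i = ∑_{i ≤ j < n} p n j · a j i`. If `c` is `p`-harmonic, expanding `c m · a m i` for
`m = k + 1` by this identity moves the boundary of the decomposition from `k` to `k + 1`, and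
induction on `k` starting from the defining equation `c i = ∑_{m > i} c m · p m i` concludes.
-/

open Finset

namespace DescendingChain

variable {p a : ℕ → ℕ → ℝ}

theorem occupation_eq_sum_first_step (ha_diag : ∀ n, 1 ≤ n → a n n = 1)
    (ha_rec : ∀ n i, 1 ≤ i → i < n → a n i = ∑ j ∈ Ioc i n, a n j * p j i)
    {n i : ℕ} (hi : 1 ≤ i) (hin : i < n) :
    a n i = ∑ j ∈ Ico i n, p n j * a j i := by
  induction hd : n - i using Nat.strong_induction_on generalizing i with
  | _ d ih =>
    have h_mid : ∀ j ∈ Ioo i n, a n j = ∑ l ∈ Ico j n, p n l * a l j := fun j hj => by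
      obtain ⟨hij, hjn⟩ := mem_Ioo.1 hj
      exact ih (n - j) (by omega) (by omega) hjn rfl
    have h_swap : ∑ j ∈ Ioo i n, ∑ l ∈ Ico j n, p n l * a l j * p j i
        = ∑ l ∈ Ioo i n, ∑ j ∈ Ioc i l, p n l * (a l j * p j i) := by
      refine sum_comm' (fun j l => ?_) |>.trans (sum_congr rfl fun _ _ => sum_congr rfl
        fun _ _ => mul_assoc ..)
      simp only [mem_Ioo, mem_Ico, mem_Ioc]
      omega
    calc a n i
        = ∑ j ∈ Ioo i n, a n j * p j i + a n n * p n i := by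
          rw [ha_rec n i hi hin, ← Ioo_insert_right hin, sum_insert right_notMem_Ioo, add_comm]
      _ = ∑ l ∈ Ioo i n, p n l * a l i + p n i * a i i := by
          rw [sum_congr rfl fun j hj => by rw [h_mid j hj, sum_mul], h_swap,
            sum_congr rfl fun l hl => by rw [← mul_sum, ← ha_rec l i hi (mem_Ioo.1 hl).1],
            ha_diag n (by omega), ha_diag i hi, one_mul, mul_one]
      _ = ∑ j ∈ Ico i n, p n j * a j i := by
          rw [← Ioo_insert_left hin, sum_insert left_notMem_Ioo, add_comm]

theorem ite_sum_Icc_succ {F : ℕ → ℕ → ℝ} {i k : ℕ} (hik : i ≤ k + 1) :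
    (fun m => if k + 1 < m then ∑ j ∈ Icc i (k + 1), F m j else 0)
      = fun m => ((if k < m then ∑ j ∈ Icc i k, F m j else 0)
          - if m = k + 1 then ∑ j ∈ Icc i k, F (k + 1) j else 0)
        + if k + 1 < m then F m (k + 1) else 0 := by
  funext m
  rcases lt_trichotomy m (k + 1) with hm | rfl | hm
  · simp [show ¬k + 1 < m by omega, show ¬k < m by omega, hm.ne]
  · simp
  · simp [hm, show k < m by omega, hm.ne', sum_Icc_succ_top hik]

theorem hasSum_occupation_decomposition (ha_diag : ∀ n, 1 ≤ n → a n n = 1)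
    (ha_rec : ∀ n i, 1 ≤ i → i < n → a n i = ∑ j ∈ Ioc i n, a n j * p j i)
    {c : ℕ → ℝ} (hc : ∀ i, 1 ≤ i → HasSum (fun j => if i < j then c j * p j i else 0) (c i))
    {i k : ℕ} (hi : 1 ≤ i) (hik : i ≤ k) :
    HasSum (fun m => if k < m then ∑ j ∈ Icc i k, c m * p m j * a j i else 0) (c i) := by
  induction k, hik using Nat.le_induction with
  | base => simpa [ha_diag i hi] using hc i hi
  | succ k hik ih =>
    have h_jump : ∑ j ∈ Icc i k, c (k + 1) * p (k + 1) j * a j i = c (k + 1) * a (k + 1) i := by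
      rw [← Ico_add_one_right_eq_Icc, occupation_eq_sum_first_step ha_diag ha_rec hi (by omega),
        mul_sum]
      exact sum_congr rfl fun _ _ => mul_assoc ..
    have h := (ih.sub (hasSum_ite_eq (k + 1) (c (k + 1) * a (k + 1) i))).add
      ((hc (k + 1) (by omega)).mul_right (a (k + 1) i))
    rw [sub_add_cancel] at h
    rw [ite_sum_Icc_succ (by omega), h_jump]
    simpa only [ite_mul, zero_mul] using h

end DescendingChain

theorem hd_decompose_at_jump_general
    (a : ℕ → ℕ → ℝ)
    (ha_diag : ∀ n : ℕ, 1 ≤ n → a n n = 1)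
    (ha_rec : ∀ n i : ℕ, 1 ≤ i → i < n →
      a n i = ∑ j ∈ Finset.Ioc i n, a n j * hdP j i)
    (c : ℕ → ℝ)
    (hc : ∀ i : ℕ, 1 ≤ i →
      HasSum (fun j : ℕ => if i < j then c j * hdP j i else 0) (c i))
    (i k : ℕ) (hi : 1 ≤ i) (hik : i ≤ k) :
    HasSum
      (fun m : ℕ =>
        if k < m then ∑ j ∈ Finset.Icc i k, c m * hdP m j * a j i else 0)
      (c i) :=
  DescendingChain.hasSum_occupation_decomposition ha_diag ha_rec hc hi hik

theorem hd_decompose_at_jump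
    (a : ℕ → ℕ → ℝ)
    (ha_diag : ∀ n : ℕ, 1 ≤ n → a n n = 1)
    (ha_rec : ∀ n i : ℕ, 1 ≤ i → i < n →
      a n i = ∑ j ∈ Finset.Ioc i n, a n j * hdP j i)
    (c : ℕ → ℝ)
    (hc_nonneg : ∀ i : ℕ, 1 ≤ i → 0 ≤ c i)
    (hc : ∀ i : ℕ, 1 ≤ i →
      HasSum (fun j : ℕ => if i < j then c j * hdP j i else 0) (c i))
    (i k : ℕ) (hi : 1 ≤ i) (hik : i ≤ k) :
    HasSum
      (fun m : ℕ =>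
        if k < m then ∑ j ∈ Finset.Icc i k, c m * hdP m j * a j i else 0)
      (c i) :=
  hd_decompose_at_jump_general a ha_diag ha_rec c hc i k hi hik
end

section
/- There exists an absolute constant K < ∞ such that for all integers 1 ≤ x < y, the expected logarithmic overshoot of the HD chain started at y over level x satisfies Σ_{j=1}^x q_x(y,j)·(log x − log j) ≤ K. -/
open Real Filter Topology MeasureTheory

/-!
Since `log x - log j` decreases in `j` while `p(y, j)` increases in `j`, Chebyshev's sum
inequality bounds the expected overshoot of a single step by the mean overshoot
`(1/x) ∑_{j ≤ x} (log x - log j) = log (x^x / x!) / x ≤ 1` times the probability of entering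
`{1, …, x}` in that step. By the first-step decomposition of `q_x(y, ·)` and strong induction
on `y`, the constant `K = 1` then bounds the expected overshoot itself.
-/

open Finset

lemma harmonic'_pos {n : ℕ} (hn : 1 ≤ n) : 0 < harmonic' n :=
  sum_pos (fun i hi => by have := (mem_Icc.mp hi).1; positivity) ⟨1, mem_Icc.mpr ⟨le_rfl, hn⟩⟩

lemma hdP_nonneg {y i : ℕ} (hi : i < y) : 0 ≤ hdP y i := by
  have hiy : (i : ℝ) < y := by exact_mod_cast hi
  have : 0 ≤ harmonic' (y - 1) := sum_nonneg fun _ _ => by positivity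
  unfold hdP
  exact one_div_nonneg.mpr (mul_nonneg (by linarith) this)

lemma hdP_monotoneOn {x y : ℕ} (hxy : x < y) : MonotoneOn (hdP y) (Icc 1 x) := by
  intro i hi j hj hij
  simp only [coe_Icc, Set.mem_Icc] at hi hj
  have hjy : (j : ℝ) < y := by exact_mod_cast (by omega : j < y)
  have hij' : (i : ℝ) ≤ j := by exact_mod_cast hij
  have := harmonic'_pos (n := y - 1) (by omega)
  unfold hdP
  gcongr

lemma sum_inv_sub_eq_harmonic' (y : ℕ) :
    ∑ i ∈ Icc 1 (y - 1), ((y : ℝ) - i)⁻¹ = harmonic' (y - 1) := by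
  refine sum_nbij' (fun i => y - i) (fun i => y - i) ?_ ?_ ?_ ?_ ?_ <;>
    intro i hi <;> simp only [mem_Icc] at hi ⊢
  · omega
  · omega
  · omega
  · omega
  · rw [Nat.cast_sub (by omega : i ≤ y), one_div]

lemma sum_hdP_eq_one {y : ℕ} (hy : 2 ≤ y) : ∑ i ∈ Icc 1 (y - 1), hdP y i = 1 := by
  have hH := harmonic'_pos (n := y - 1) (by omega)
  calc ∑ i ∈ Icc 1 (y - 1), hdP y i
      = (∑ i ∈ Icc 1 (y - 1), ((y : ℝ) - i)⁻¹) * (harmonic' (y - 1))⁻¹ := by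
        simp only [hdP, one_div, mul_inv, sum_mul]
    _ = 1 := by rw [sum_inv_sub_eq_harmonic', mul_inv_cancel₀ hH.ne']

lemma sum_log_sub_log_le (x : ℕ) : ∑ j ∈ Icc 1 x, (Real.log x - Real.log j) ≤ x := by
  rcases Nat.eq_zero_or_pos x with rfl | hx
  · simp
  have hfact : ∑ j ∈ Icc 1 x, Real.log j = Real.log x.factorial := by
    rw [← Real.log_prod fun j hj => by have := (mem_Icc.mp hj).1; positivity,
      ← Ico_add_one_right_eq_Icc, ← Nat.cast_prod, prod_Ico_id_eq_factorial]
  calc ∑ j ∈ Icc 1 x, (Real.log x - Real.log j) = x * Real.log x - Real.log x.factorial := by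
        rw [sum_sub_distrib, sum_const, Nat.card_Icc, hfact, Nat.add_sub_cancel, nsmul_eq_mul]
    _ = Real.log ((x : ℝ) ^ x / x.factorial) := by
        rw [Real.log_div (by positivity) (by positivity), Real.log_pow]
    _ ≤ Real.log (Real.exp x) :=
        Real.log_le_log (by positivity) (Real.pow_div_factorial_le_exp _ (by positivity) x)
    _ = x := Real.log_exp _

lemma sum_hdP_mul_log_sub_log_le {x y : ℕ} (hx : 1 ≤ x) (hxy : x < y) :
    ∑ j ∈ Icc 1 x, hdP y j * (Real.log x - Real.log j) ≤ ∑ j ∈ Icc 1 x, hdP y j := by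
  have hlog : AntitoneOn (fun j : ℕ => Real.log x - Real.log j) (Icc 1 x) := by
    intro i hi j _ hij
    have : (0 : ℝ) < i := by have := (mem_Icc.mp hi).1; positivity
    have : Real.log i ≤ Real.log j := Real.log_le_log this (by exact_mod_cast hij)
    dsimp only
    linarith
  have hcheb := (hlog.antivaryOn (hdP_monotoneOn hxy)).card_mul_sum_le_sum_mul_sum
  have hp : 0 ≤ ∑ j ∈ Icc 1 x, hdP y j :=
    sum_nonneg fun j hj => hdP_nonneg (by have := (mem_Icc.mp hj).2; omega)
  rw [Nat.card_Icc, Nat.add_sub_cancel] at hcheb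
  have hx' : (0 : ℝ) < x := by exact_mod_cast hx
  refine le_of_mul_le_mul_left ?_ hx'
  calc (x : ℝ) * ∑ j ∈ Icc 1 x, hdP y j * (Real.log x - Real.log j)
      ≤ (∑ j ∈ Icc 1 x, (Real.log x - Real.log j)) * ∑ j ∈ Icc 1 x, hdP y j := by
        simpa only [mul_comm (hdP y _)] using hcheb
    _ ≤ x * ∑ j ∈ Icc 1 x, hdP y j := mul_le_mul_of_nonneg_right (sum_log_sub_log_le x) hp

def IsEntranceLaw (x : ℕ) (q : ℕ → ℕ → ℝ) : Prop :=
  ∀ y j, 1 ≤ j → j ≤ x → x < y → q y j = hdP y j + ∑ z ∈ Ioc x (y - 1), hdP y z * q z j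

namespace IsEntranceLaw

variable {x : ℕ} {q : ℕ → ℕ → ℝ}

lemma sum_mul_eq_first_step (hq : IsEntranceLaw x q) (f : ℕ → ℝ) {y : ℕ} (hxy : x < y) :
    ∑ j ∈ Icc 1 x, q y j * f j = ∑ j ∈ Icc 1 x, hdP y j * f j
      + ∑ z ∈ Ioc x (y - 1), hdP y z * ∑ j ∈ Icc 1 x, q z j * f j := by
  simp only [mul_sum]
  rw [sum_comm (s := Ioc x (y - 1)), ← sum_add_distrib]
  refine sum_congr rfl fun j hj => ?_
  obtain ⟨hj1, hjx⟩ := mem_Icc.mp hj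
  rw [hq y j hj1 hjx hxy, add_mul, sum_mul]
  simp only [mul_assoc]

lemma sum_mul_le (hq : IsEntranceLaw x q) (hx : 1 ≤ x) (f : ℕ → ℝ) (K : ℝ)
    (hf : ∀ y, x < y → ∑ j ∈ Icc 1 x, hdP y j * f j ≤ K * ∑ j ∈ Icc 1 x, hdP y j)
    {y : ℕ} (hxy : x < y) :
    ∑ j ∈ Icc 1 x, q y j * f j ≤ K := by
  induction y using Nat.strong_induction_on with
  | _ y ih =>
  have hsplit : ∑ j ∈ Icc 1 x, hdP y j + ∑ z ∈ Ioc x (y - 1), hdP y z = 1 := by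
    have hdisj : Disjoint (Icc 1 x) (Ioc x (y - 1)) :=
      disjoint_left.mpr fun a ha hb => by simp only [mem_Icc, mem_Ioc] at ha hb; omega
    have hunion : Icc 1 x ∪ Ioc x (y - 1) = Icc 1 (y - 1) := by
      ext a; simp only [mem_union, mem_Icc, mem_Ioc]; omega
    rw [← sum_union hdisj, hunion, sum_hdP_eq_one (by omega)]
  have hrest : ∑ z ∈ Ioc x (y - 1), hdP y z * ∑ j ∈ Icc 1 x, q z j * f j
      ≤ K * ∑ z ∈ Ioc x (y - 1), hdP y z := by
    rw [mul_sum]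
    refine sum_le_sum fun z hz => ?_
    obtain ⟨hxz, hzy⟩ := mem_Ioc.mp hz
    rw [mul_comm K]
    exact mul_le_mul_of_nonneg_left (ih z (by omega) hxz) (hdP_nonneg (by omega))
  calc ∑ j ∈ Icc 1 x, q y j * f j
      = ∑ j ∈ Icc 1 x, hdP y j * f j
        + ∑ z ∈ Ioc x (y - 1), hdP y z * ∑ j ∈ Icc 1 x, q z j * f j :=
        hq.sum_mul_eq_first_step f hxy
    _ ≤ K * (∑ j ∈ Icc 1 x, hdP y j + ∑ z ∈ Ioc x (y - 1), hdP y z) := by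
        rw [mul_add]; exact add_le_add (hf y hxy) hrest
    _ = K := by rw [hsplit, mul_one]

end IsEntranceLaw

theorem hd_log_overshoot_bounded
    (q : ℕ → ℕ → ℕ → ℝ)
    (hq : ∀ x y j : ℕ, 1 ≤ j → j ≤ x → x < y →
      q x y j = hdP y j + ∑ z ∈ Finset.Ioc x (y - 1), hdP y z * q x z j) :
    ∃ K : ℝ, ∀ x y : ℕ, 1 ≤ x → x < y →
      ∑ j ∈ Finset.Icc 1 x, q x y j * (Real.log x - Real.log j) ≤ K :=
  ⟨1, fun x _ hx hxy => IsEntranceLaw.sum_mul_le (hq x) hx _ 1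
    (fun _ hxy' => by simpa only [one_mul] using sum_hdP_mul_log_sub_log_le hx hxy') hxy⟩
end

section
/- Define g(a) := (∫_a^∞ −log(1 − e^{−s}) ds) / (−log(1 − e^{−a})) for a > 0. Then g is nondecreasing on (0,∞), g(a) ≤ 1 for all a > 0, and g(a) → 1 as a → ∞. -/
open Real Filter Topology MeasureTheory

/-- The normalized mean excess function of the measure `θ` with tail
`θ[a,∞) = -log(1 - e^{-a})`. -/
noncomputable def meanExcess (a : ℝ) : ℝ :=
  (∫ s in Set.Ioi a, -Real.log (1 - Real.exp (-s))) / (-Real.log (1 - Real.exp (-a)))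

/-!
Put `x = e^{-a}`. Integrating `-log(1 - e^{-s}) = ∑ e^{-ns}/n` termwise shows that
`meanExcess a = Li₂ x / (-log (1 - x))`, a ratio of the power series `∑ xⁿ/n²` and `∑ xⁿ/n`.
Since the ratio `1/n` of their coefficients decreases, a Chebyshev-type pairing of the terms
`(m, n)` and `(n, m)` of the double series shows that this ratio of power series decreases in `x`,
i.e. increases in `a`. Comparing coefficients gives the bound `≤ 1`, and `Li₂ x ≥ x` together
with `-log (1 - x) ≤ x / (1 - x)` gives the bound `≥ 1 - x`, whence the limit.
-/

open Set

theorem tsum_nonneg_of_add_swap_nonneg {α : Type*} {f : α × α → ℝ} (hf : Summable f)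
    (h : ∀ p : α × α, 0 ≤ f p + f p.swap) : 0 ≤ ∑' p, f p := by
  have hswap : ∑' p : α × α, f p.swap = ∑' p, f p := (Equiv.prodComm α α).tsum_eq f
  have hsum : 0 ≤ ∑' p : α × α, (f p + f p.swap) := tsum_nonneg h
  have hf' : Summable fun p : α × α => f p.swap := (Equiv.prodComm α α).summable_iff.mpr hf
  rw [hf.tsum_add hf', hswap] at hsum
  linarith

theorem pow_mul_pow_le_pow_mul_pow {R : Type*} [CommSemiring R] [PartialOrder R]
    [IsOrderedRing R] {x y : R} (hy : 0 ≤ y) (hyx : y ≤ x) {m n : ℕ} (hmn : m ≤ n) :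
    x ^ m * y ^ n ≤ y ^ m * x ^ n := by
  obtain ⟨k, rfl⟩ := Nat.exists_eq_add_of_le hmn
  have hxy : 0 ≤ x ^ m * y ^ m := mul_nonneg (pow_nonneg (hy.trans hyx) m) (pow_nonneg hy m)
  calc x ^ m * y ^ (m + k) = x ^ m * y ^ m * y ^ k := by ring
    _ ≤ x ^ m * y ^ m * x ^ k := mul_le_mul_of_nonneg_left (pow_le_pow_left₀ hy hyx k) hxy
    _ = y ^ m * x ^ (m + k) := by ring

/-- A Chebyshev-type inequality: `∑ u a / ∑ v a ≤ ∑ u b / ∑ v b`. -/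
theorem tsum_mul_tsum_le_of_antitone_ratio {a b u v : ℕ → ℝ}
    (ha : 0 ≤ a) (hb : 0 ≤ b) (hu : 0 ≤ u) (hv : 0 ≤ v)
    (hab : ∀ ⦃m n⦄, m ≤ n → a n * b m ≤ a m * b n)
    (huv : ∀ ⦃m n⦄, m ≤ n → u m * v n ≤ v m * u n)
    (hua : Summable fun n => u n * a n) (hvb : Summable fun n => v n * b n)
    (hva : Summable fun n => v n * a n) (hub : Summable fun n => u n * b n) :
    (∑' n, u n * a n) * (∑' n, v n * b n) ≤ (∑' n, v n * a n) * (∑' n, u n * b n) := by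
  have hL := hua.mul_of_nonneg hvb (fun n => mul_nonneg (hu n) (ha n))
    (fun n => mul_nonneg (hv n) (hb n))
  have hR := hva.mul_of_nonneg hub (fun n => mul_nonneg (hv n) (ha n))
    (fun n => mul_nonneg (hu n) (hb n))
  rw [hua.tsum_mul_tsum hvb hL, hva.tsum_mul_tsum hub hR, ← sub_nonneg, ← hR.tsum_sub hL]
  refine tsum_nonneg_of_add_swap_nonneg (hR.sub hL) fun ⟨m, n⟩ => ?_
  have hpair : v m * a m * (u n * b n) - u m * a m * (v n * b n)
      + (v n * a n * (u m * b m) - u n * a n * (v m * b m))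
      = (a m * b n - a n * b m) * (v m * u n - u m * v n) := by ring
  simp only [Prod.swap, hpair]
  rcases le_total m n with hmn | hnm
  · exact mul_nonneg (sub_nonneg.mpr (hab hmn)) (sub_nonneg.mpr (huv hmn))
  · exact mul_nonneg_of_nonpos_of_nonpos (sub_nonpos.mpr (hab hnm)) (by linarith [huv hnm])

noncomputable def dilog (x : ℝ) : ℝ := ∑' n : ℕ, x ^ (n + 1) / ((n : ℝ) + 1) ^ 2

theorem summable_dilog {x : ℝ} (hx : |x| ≤ 1) :
    Summable fun n : ℕ => x ^ (n + 1) / ((n : ℝ) + 1) ^ 2 := by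
  have hp : Summable fun n : ℕ => 1 / ((n : ℝ) + 1) ^ 2 := by
    simpa using (summable_nat_add_iff 1).mpr (summable_one_div_nat_pow.mpr one_lt_two)
  refine hp.of_norm_bounded fun n => ?_
  rw [norm_div, norm_pow, Real.norm_eq_abs, norm_of_nonneg (by positivity)]
  gcongr
  exact pow_le_one₀ (abs_nonneg x) hx

theorem self_le_dilog {x : ℝ} (h0 : 0 ≤ x) (h1 : x ≤ 1) : x ≤ dilog x := by
  unfold dilog
  simpa using (summable_dilog (abs_le.mpr ⟨by linarith, h1⟩)).le_tsum 0
    fun n _ => by positivity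

theorem dilog_le_neg_log_one_sub {x : ℝ} (h0 : 0 ≤ x) (h1 : x < 1) :
    dilog x ≤ -log (1 - x) := by
  have hx : |x| < 1 := abs_lt.mpr ⟨by linarith, h1⟩
  refine hasSum_le (fun n => ?_) (summable_dilog hx.le).hasSum
    (hasSum_pow_div_log_of_abs_lt_one hx)
  have hn : (n : ℝ) + 1 ≤ ((n : ℝ) + 1) ^ 2 := by nlinarith [n.cast_nonneg (α := ℝ)]
  exact div_le_div_of_nonneg_left (by positivity) (by positivity) hn

theorem neg_log_one_sub_le {x : ℝ} (h1 : x < 1) : -log (1 - x) ≤ x / (1 - x) := by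
  have h : 0 < 1 - x := sub_pos.mpr h1
  have hlog := log_le_sub_one_of_pos (inv_pos.mpr h)
  rw [log_inv] at hlog
  have hx : x / (1 - x) = (1 - x)⁻¹ - 1 := by field_simp; ring
  linarith

theorem dilog_mul_neg_log_le {x y : ℝ} (hy : 0 ≤ y) (hyx : y ≤ x) (hx : x < 1) :
    dilog x * -log (1 - y) ≤ dilog y * -log (1 - x) := by
  have hx' : |x| < 1 := abs_lt.mpr ⟨by linarith, hx⟩
  have hy' : |y| < 1 := abs_lt.mpr ⟨by linarith, by linarith⟩
  rw [← (hasSum_pow_div_log_of_abs_lt_one hx').tsum_eq,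
    ← (hasSum_pow_div_log_of_abs_lt_one hy').tsum_eq]
  have hdx := summable_dilog hx'.le
  have hdy := summable_dilog hy'.le
  have hlx := (hasSum_pow_div_log_of_abs_lt_one hx').summable
  have hly := (hasSum_pow_div_log_of_abs_lt_one hy').summable
  simp only [dilog, div_eq_mul_inv] at hdx hdy hlx hly ⊢
  refine tsum_mul_tsum_le_of_antitone_ratio (fun n => by positivity) (fun n => by positivity)
    (fun n => pow_nonneg (hy.trans hyx) _) (fun n => pow_nonneg hy _) (fun m n hmn => ?_)
    (fun m n hmn => pow_mul_pow_le_pow_mul_pow hy hyx (Nat.succ_le_succ hmn)) hdx hly hdy hlx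
  have hmn' : (m : ℝ) + 1 ≤ (n : ℝ) + 1 := by exact_mod_cast Nat.succ_le_succ hmn
  rw [← mul_inv, ← mul_inv]
  apply inv_anti₀ (by positivity)
  have hmn0 : (0 : ℝ) ≤ ((m : ℝ) + 1) * ((n : ℝ) + 1) := by positivity
  nlinarith [mul_le_mul_of_nonneg_left hmn' hmn0]

theorem exp_neg_pow (n : ℕ) (s : ℝ) : exp (-s) ^ n = exp (-n * s) := by
  rw [← exp_nat_mul, neg_mul, mul_neg]

theorem integral_Ioi_exp_neg_pow_succ (n : ℕ) (a : ℝ) :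
    ∫ s in Ioi a, exp (-s) ^ (n + 1) = exp (-a) ^ (n + 1) / ((n : ℝ) + 1) := by
  have hn : -((n : ℝ) + 1) < 0 := by linarith [n.cast_nonneg (α := ℝ)]
  simp_rw [exp_neg_pow, Nat.cast_succ]
  rw [integral_exp_mul_Ioi hn, neg_div_neg_eq]

theorem integral_Ioi_neg_log_one_sub_exp_neg {a : ℝ} (ha : 0 ≤ a) :
    ∫ s in Ioi a, -log (1 - exp (-s)) = dilog (exp (-a)) := by
  set F : ℕ → ℝ → ℝ := fun n s => exp (-s) ^ (n + 1) / ((n : ℝ) + 1)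
  have hF : ∀ n, ∫ s in Ioi a, F n s = exp (-a) ^ (n + 1) / ((n : ℝ) + 1) ^ 2 := fun n => by
    rw [integral_div, integral_Ioi_exp_neg_pow_succ, div_div, ← sq]
  have hFnorm : ∀ n, ∫ s in Ioi a, ‖F n s‖ = ∫ s in Ioi a, F n s := fun n =>
    integral_congr_ae (ae_of_all _ fun s => norm_of_nonneg (by positivity))
  have hFint : ∀ n, IntegrableOn (F n) (Ioi a) := fun n => by
    have h := exp_neg_integrableOn_Ioi a (b := (n : ℝ) + 1) (by positivity)
    simp_rw [← Nat.cast_succ, ← exp_neg_pow] at h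
    exact h.div_const _
  have hseries : ∀ s ∈ Ioi a, -log (1 - exp (-s)) = ∑' n, F n s := fun s hs => by
    have hs1 : |exp (-s)| < 1 := by
      rw [abs_of_pos (exp_pos _)]
      exact exp_lt_one_iff.mpr (by linarith [mem_Ioi.mp hs])
    exact (hasSum_pow_div_log_of_abs_lt_one hs1).tsum_eq.symm
  have hsum : Summable fun n => ∫ s in Ioi a, ‖F n s‖ := by
    simp_rw [hFnorm, hF]
    refine summable_dilog ?_
    rw [abs_of_pos (exp_pos _)]
    exact exp_le_one_iff.mpr (by linarith)
  rw [setIntegral_congr_fun measurableSet_Ioi hseries,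
    ← integral_tsum_of_summable_integral_norm hFint hsum, dilog]
  exact tsum_congr hF

theorem neg_log_one_sub_pos {x : ℝ} (hx : x ∈ Ioo (0 : ℝ) 1) : 0 < -log (1 - x) :=
  neg_pos.mpr (log_neg (by linarith [hx.2]) (by linarith [hx.1]))

theorem dilog_div_neg_log_one_sub_le_one {x : ℝ} (h0 : 0 ≤ x) (h1 : x < 1) :
    dilog x / -log (1 - x) ≤ 1 :=
  div_le_one_of_le₀ (dilog_le_neg_log_one_sub h0 h1)
    (neg_nonneg.mpr (log_nonpos (by linarith) (by linarith)))

theorem one_sub_le_dilog_div_neg_log_one_sub {x : ℝ} (hx : x ∈ Ioo (0 : ℝ) 1) :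
    1 - x ≤ dilog x / -log (1 - x) := by
  have h : 0 < 1 - x := sub_pos.mpr hx.2
  rw [le_div_iff₀ (neg_log_one_sub_pos hx)]
  calc (1 - x) * -log (1 - x) ≤ (1 - x) * (x / (1 - x)) :=
        mul_le_mul_of_nonneg_left (neg_log_one_sub_le hx.2) h.le
    _ = x := by field_simp
    _ ≤ dilog x := self_le_dilog hx.1.le hx.2.le

theorem antitoneOn_dilog_div_neg_log_one_sub :
    AntitoneOn (fun x => dilog x / -log (1 - x)) (Ioo 0 1) := fun y hy x hx hyx => by
  rw [div_le_div_iff₀ (neg_log_one_sub_pos hx) (neg_log_one_sub_pos hy)]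
  exact dilog_mul_neg_log_le hy.1.le hyx hx.2

theorem exp_neg_mem_Ioo {a : ℝ} (ha : 0 < a) : exp (-a) ∈ Ioo (0 : ℝ) 1 :=
  ⟨exp_pos _, exp_lt_one_iff.mpr (neg_lt_zero.mpr ha)⟩

theorem meanExcess_eq_dilog_div {a : ℝ} (ha : 0 ≤ a) :
    meanExcess a = dilog (exp (-a)) / -log (1 - exp (-a)) := by
  rw [meanExcess, integral_Ioi_neg_log_one_sub_exp_neg ha]

theorem meanExcess_le_one {a : ℝ} (ha : 0 < a) : meanExcess a ≤ 1 := by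
  rw [meanExcess_eq_dilog_div ha.le]
  exact dilog_div_neg_log_one_sub_le_one (exp_pos _).le (exp_neg_mem_Ioo ha).2

theorem one_sub_exp_neg_le_meanExcess {a : ℝ} (ha : 0 < a) : 1 - exp (-a) ≤ meanExcess a := by
  rw [meanExcess_eq_dilog_div ha.le]
  exact one_sub_le_dilog_div_neg_log_one_sub (exp_neg_mem_Ioo ha)

theorem monotoneOn_meanExcess : MonotoneOn meanExcess (Ioi 0) := fun a ha b hb hab => by
  rw [meanExcess_eq_dilog_div (le_of_lt ha), meanExcess_eq_dilog_div (le_of_lt hb)]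
  exact antitoneOn_dilog_div_neg_log_one_sub (exp_neg_mem_Ioo hb) (exp_neg_mem_Ioo ha)
    (exp_le_exp.mpr (neg_le_neg hab))

theorem tendsto_meanExcess_atTop : Tendsto meanExcess atTop (𝓝 1) := by
  have hlower : Tendsto (fun a => 1 - exp (-a)) atTop (𝓝 1) := by
    simpa using tendsto_exp_neg_atTop_nhds_zero.const_sub 1
  refine tendsto_of_tendsto_of_tendsto_of_le_of_le' hlower tendsto_const_nhds ?_ ?_ <;>
    filter_upwards [eventually_gt_atTop 0] with a ha
  exacts [one_sub_exp_neg_le_meanExcess ha, meanExcess_le_one ha]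

theorem meanExcess_mono_le_one_tendsto_one :
    MonotoneOn meanExcess (Set.Ioi 0) ∧
    (∀ a : ℝ, 0 < a → meanExcess a ≤ 1) ∧
    Filter.Tendsto meanExcess Filter.atTop (𝓝 1) :=
  ⟨monotoneOn_meanExcess, fun _ => meanExcess_le_one, tendsto_meanExcess_atTop⟩
end

section
/- For every integer x ≥ 2, Σ_{i=1}^{x−1} (1/(x−i))·(i^{−1/2} − x^{−1/2}) ≤ 2·x^{−1/2}. -/
/-! For `0 < a < b`, the difference quotient of `t ↦ t^{-1/2}` satisfies
`(a^{-1/2} - b^{-1/2}) / (b - a) = 1 / (√a √b (√a + √b)) ≤ 1 / (b √a)`, so the drift is at most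
`x⁻¹ ∑_{i<x} i^{-1/2}`, and the telescoping bound `i^{-1/2} ≤ 2 (√i - √(i-1))` gives
`∑_{i<x} i^{-1/2} ≤ 2 √x`. -/

open Real Filter Topology MeasureTheory

open Finset

lemma inv_sub_inv_div_sq_sub_sq_le {s t : ℝ} (hs : 0 < s) (hst : s < t) :
    (s⁻¹ - t⁻¹) / (t ^ 2 - s ^ 2) ≤ (t ^ 2 * s)⁻¹ := by
  have ht : 0 < t := hs.trans hst
  calc (s⁻¹ - t⁻¹) / (t ^ 2 - s ^ 2) = (s * t * (t + s))⁻¹ := by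
        have : t ^ 2 - s ^ 2 ≠ 0 := by nlinarith
        field_simp
        ring
    _ ≤ (t ^ 2 * s)⁻¹ := inv_anti₀ (by positivity) (by nlinarith [mul_pos hs hs])

lemma inv_sqrt_sub_inv_sqrt_div_sub_le {a b : ℝ} (ha : 0 < a) (hab : a < b) :
    ((√a)⁻¹ - (√b)⁻¹) / (b - a) ≤ (b * √a)⁻¹ := by
  have h := inv_sub_inv_div_sq_sub_sq_le (sqrt_pos.2 ha) (sqrt_lt_sqrt ha.le hab)
  rwa [sq_sqrt ha.le, sq_sqrt (ha.trans hab).le] at h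

lemma inv_sqrt_add_one_le_two_mul_sqrt_sub {a : ℝ} (ha : 0 ≤ a) :
    (√(a + 1))⁻¹ ≤ 2 * (√(a + 1) - √a) := by
  have hsq : √(a + 1) ^ 2 = √a ^ 2 + 1 := by rw [sq_sqrt (by linarith), sq_sqrt ha]
  have hpos : 0 < √(a + 1) := sqrt_pos.2 (by linarith)
  rw [inv_le_iff_one_le_mul₀' hpos]
  nlinarith [sqrt_nonneg a, sq_nonneg (√(a + 1) - √a)]

lemma sum_range_inv_sqrt_succ_le (n : ℕ) : ∑ i ∈ range n, (√((i : ℝ) + 1))⁻¹ ≤ 2 * √n := by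
  calc ∑ i ∈ range n, (√((i : ℝ) + 1))⁻¹
      ≤ ∑ i ∈ range n, 2 * (√((i + 1 : ℕ) : ℝ) - √(i : ℝ)) := by
        gcongr with i
        exact_mod_cast inv_sqrt_add_one_le_two_mul_sqrt_sub i.cast_nonneg
    _ = 2 * √n := by rw [← mul_sum, sum_range_sub (fun i : ℕ => √(i : ℝ))]; simp

lemma sum_Ico_one_inv_sqrt_le (n : ℕ) : ∑ i ∈ Ico 1 n, (√(i : ℝ))⁻¹ ≤ 2 * √n := by
  calc ∑ i ∈ Ico 1 n, (√(i : ℝ))⁻¹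
      = ∑ i ∈ range (n - 1), (√((i : ℝ) + 1))⁻¹ := by
        rw [sum_Ico_eq_sum_range]; push_cast; simp only [add_comm]
    _ ≤ 2 * √((n - 1 : ℕ) : ℝ) := sum_range_inv_sqrt_succ_le _
    _ ≤ 2 * √n := by gcongr; exact_mod_cast n.sub_le 1

theorem hd_drift_bound_inv_sqrt_general (x : ℕ) :
    ∑ i ∈ Finset.Ico 1 x,
        (1 / ((x : ℝ) - (i : ℝ))) * ((Real.sqrt i)⁻¹ - (Real.sqrt x)⁻¹)
      ≤ 2 * (Real.sqrt x)⁻¹ := by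
  calc ∑ i ∈ Ico 1 x, (1 / ((x : ℝ) - (i : ℝ))) * ((√(i : ℝ))⁻¹ - (√(x : ℝ))⁻¹)
      ≤ ∑ i ∈ Ico 1 x, (x : ℝ)⁻¹ * (√(i : ℝ))⁻¹ := by
        refine sum_le_sum fun i hi => ?_
        obtain ⟨hi1, hix⟩ := mem_Ico.1 hi
        rw [one_div_mul_eq_div, ← mul_inv]
        exact inv_sqrt_sub_inv_sqrt_div_sub_le (by exact_mod_cast hi1) (by exact_mod_cast hix)
    _ ≤ (x : ℝ)⁻¹ * (2 * √x) := by rw [← mul_sum]; gcongr; exact sum_Ico_one_inv_sqrt_le x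
    _ = 2 * (√(x : ℝ))⁻¹ := by rw [mul_left_comm, ← div_eq_inv_mul, sqrt_div_self]

theorem hd_drift_bound_inv_sqrt (x : ℕ) (hx : 2 ≤ x) :
    ∑ i ∈ Finset.Ico 1 x,
        (1 / ((x : ℝ) - (i : ℝ))) * ((Real.sqrt i)⁻¹ - (Real.sqrt x)⁻¹)
      ≤ 2 * (Real.sqrt x)⁻¹ :=
  hd_drift_bound_inv_sqrt_general x
end
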